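/- arXiv:2512.12380 — 2 statements merged into one kernel-verified Lean document; each statement's English description precedes it below -/
import Mathlib

section
/- Let a ≠ 0, b > 0, A ≥ 0, B ≥ 0, set q = a B + b (with q > 0 assumed when a < 0), I₁ = A + (1/b)·B/q, λ = q A + B/q. If I₁ ≤ 1/(6|a| b), then b/2 ≤ q ≤ (3/2) b and |a| λ ≤ 1/2. -/
theorem stmt_9 (a b A B : ℝ) (ha : a ≠ 0) (hb : 0 < b)
    (hA : 0 ≤ A) (hB : 0 ≤ B)
    (hq : a < 0 → B < b / |a|)
    (h : A + (1/b) * (B / (a * B + b)) ≤ 1 / (6 * |a| * b)) :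
    (b / 2 ≤ a * B + b ∧ a * B + b ≤ (3/2) * b)
    ∧ |a| * ((a * B + b) * A + B / (a * B + b)) ≤ 1/2 := by
  have habs : 0 < |a| := abs_pos.mpr ha
  have hq0 : 0 < a * B + b := by
    rcases ha.lt_or_gt with h1 | h1
    · have h2 := hq h1
      rw [abs_of_neg h1] at h2
      have h3 : B * (-a) < b := (lt_div_iff₀ (by linarith)).mp h2
      nlinarith
    · nlinarith
  have hrnn : 0 ≤ B / (a*B+b) := div_nonneg hB hq0.le
  have hBq : B / (a*B+b) ≤ 1 / (6*|a|) := by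
    have h' : (1/b) * (B/(a*B+b)) ≤ 1/(6*|a| *b) := by linarith
    calc B/(a*B+b) = b * ((1/b)*(B/(a*B+b))) := by field_simp
      _ ≤ b * (1/(6*|a| *b)) := by nlinarith
      _ = 1/(6*|a|) := by field_simp
  have hA' : A ≤ 1/(6*|a| *b) := by
    have : 0 ≤ (1/b) * (B/(a*B+b)) := by positivity
    linarith
  have hB6 : 6*|a| *B ≤ a*B+b := by
    rw [div_le_div_iff₀ hq0 (by positivity)] at hBq
    linarith
  have hpart1 : b / 2 ≤ a * B + b ∧ a * B + b ≤ (3/2) * b := by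
    rcases ha.lt_or_gt with h1 | h1
    · rw [abs_of_neg h1] at hB6
      constructor <;> nlinarith
    · rw [abs_of_pos h1] at hB6
      constructor <;> nlinarith
  refine ⟨hpart1, ?_⟩
  have hA2 : A * (6*|a| *b) ≤ 1 := by
    rw [le_div_iff₀ (by positivity)] at hA'
    linarith
  have h1 : |a| * ((a*B+b) * A) ≤ 1/4 := by
    nlinarith [mul_nonneg habs.le hA, mul_le_mul_of_nonneg_left hpart1.2 (mul_nonneg habs.le hA)]
  have h2 : |a| * (B/(a*B+b)) ≤ 1/6 := by
    have := mul_le_mul_of_nonneg_left hBq habs.le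
    calc |a| * (B/(a*B+b)) ≤ |a| * (1/(6*|a|)) := this
      _ = 1/6 := by field_simp
  nlinarith [h1, h2]
end

section
/- Scalar model of Theorem 1 (single-mode third-order conservation): let q : [0,T) → ℝ be C⁴ and nonvanishing, ξ ∈ ℝⁿ, and w : [0,T) → ℂ a C² solution of w'' + (|ξ|²/q²)w = 0. Define 𝔈(t) := α₀|ξ|⁴(|w'|² + (|ξ|²/q²)|w|²) + α₁|ξ|²(|w'|² + (|ξ|²/q²)|w|²) + β₀|ξ|⁴Re(conj(w)w') + β₁|ξ|²Re(conj(w)w') + γ₀|ξ|²|w'|², where α₀ = q, β₀ = -q', γ₀ = -(1/2)q²q'', α₁ = (1/4)q(q'²/2 + qq''), β₁ = -(1/4)(q'³/2 - qq'q'' - q²q'''). Then d/dt 𝔈(t) = β₁'(t)·|ξ|²·Re(conj(w(t))·w'(t)). -/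
open Set

/-! For `w'' = -k w` in a real inner product space (here `ℂ`, where
`Re (conj w * w') = ⟪w, w'⟫_ℝ`), the quantities `‖w'‖²`, `⟪w, w'⟫` and `‖w‖²` close under
differentiation, so the derivative of `A (‖w'‖² + k ‖w‖²) + B ⟪w, w'⟫ + C ‖w'‖²` is again a
combination of them. The coefficients `α₁`, `β₁`, `γ₀` are exactly those that make the
`‖w'‖²`- and `‖w‖²`-components vanish and reduce the `⟪w, w'⟫`-component to `β₁' |ξ|²`. -/

section Oscillator

variable {E : Type*} [NormedAddCommGroup E] [InnerProductSpace ℝ E]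
  {w w' : ℝ → E} {k A B C : ℝ → ℝ} {k' A' B' C' t : ℝ}

open RealInnerProductSpace

theorem hasDerivAt_norm_sq_deriv_of_ode (hw' : HasDerivAt w' (-k t • w t) t) :
    HasDerivAt (fun s => ‖w' s‖ ^ 2) (-2 * k t * ⟪w t, w' t⟫) t := by
  refine hw'.norm_sq.congr_deriv ?_
  rw [real_inner_smul_right, real_inner_comm]
  ring

theorem hasDerivAt_inner_deriv_of_ode (hw : HasDerivAt w (w' t) t)
    (hw' : HasDerivAt w' (-k t • w t) t) :
    HasDerivAt (fun s => ⟪w s, w' s⟫) (‖w' t‖ ^ 2 - k t * ‖w t‖ ^ 2) t := by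
  refine (hw.inner ℝ hw').congr_deriv ?_
  rw [real_inner_smul_right, real_inner_self_eq_norm_sq, real_inner_self_eq_norm_sq]
  ring

theorem hasDerivAt_energy_of_ode (hw : HasDerivAt w (w' t) t)
    (hw' : HasDerivAt w' (-k t • w t) t) (hk : HasDerivAt k k' t) :
    HasDerivAt (fun s => ‖w' s‖ ^ 2 + k s * ‖w s‖ ^ 2) (k' * ‖w t‖ ^ 2) t := by
  have hnorm : HasDerivAt (fun s => ‖w s‖ ^ 2) (2 * ⟪w t, w' t⟫) t := hw.norm_sq
  exact ((hasDerivAt_norm_sq_deriv_of_ode hw').fun_add (hk.fun_mul hnorm)).congr_deriv (by ring)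

theorem hasDerivAt_quadratic_of_ode (hw : HasDerivAt w (w' t) t)
    (hw' : HasDerivAt w' (-k t • w t) t) (hk : HasDerivAt k k' t)
    (hA : HasDerivAt A A' t) (hB : HasDerivAt B B' t) (hC : HasDerivAt C C' t)
    (h_norm_deriv : A' + B t + C' = 0) (h_norm : A' * k t + A t * k' = B t * k t) :
    HasDerivAt
      (fun s => A s * (‖w' s‖ ^ 2 + k s * ‖w s‖ ^ 2) + B s * ⟪w s, w' s⟫ + C s * ‖w' s‖ ^ 2)
      ((B' - 2 * C t * k t) * ⟪w t, w' t⟫) t := by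
  refine (((hA.fun_mul (hasDerivAt_energy_of_ode hw hw' hk)).fun_add
    (hB.fun_mul (hasDerivAt_inner_deriv_of_ode hw hw'))).fun_add
    (hC.fun_mul (hasDerivAt_norm_sq_deriv_of_ode hw'))).congr_deriv ?_
  linear_combination (‖w' t‖ ^ 2) * h_norm_deriv + (‖w t‖ ^ 2) * h_norm

end Oscillator

section Coefficients

variable {q q1 q2 q3 : ℝ → ℝ} {t : ℝ}

theorem hasDerivAt_const_div_sq (c : ℝ) (hq : HasDerivAt q (q1 t) t) (hq0 : q t ≠ 0) :
    HasDerivAt (fun s => c / q s ^ 2) (-2 * c * q1 t / q t ^ 3) t := by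
  refine ((hasDerivAt_const t c).div (hq.fun_pow 2) (pow_ne_zero 2 hq0)).congr_deriv ?_
  field_simp
  ring

theorem hasDerivAt_alpha₁ (hq : HasDerivAt q (q1 t) t) (hq1 : HasDerivAt q1 (q2 t) t)
    (hq2 : HasDerivAt q2 (q3 t) t) :
    HasDerivAt (fun s => 1/4 * q s * (q1 s ^ 2 / 2 + q s * q2 s))
      (q1 t ^ 3 / 8 + 3/4 * q t * q1 t * q2 t + q t ^ 2 * q3 t / 4) t := by
  refine ((hq.const_mul (1/4)).fun_mul
    (((hq1.fun_pow 2).div_const 2).fun_add (hq.fun_mul hq2))).congr_deriv ?_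
  ring

theorem hasDerivAt_gamma₀ (hq : HasDerivAt q (q1 t) t) (hq2 : HasDerivAt q2 (q3 t) t) :
    HasDerivAt (fun s => -(1/2) * q s ^ 2 * q2 s)
      (-(q t * q1 t * q2 t + q t ^ 2 * q3 t / 2)) t := by
  refine (((hq.fun_pow 2).const_mul (-(1/2))).fun_mul hq2).congr_deriv ?_
  ring

end Coefficients

theorem stmt_18_general {n : ℕ} (T : ℝ)
    (q q1 q2 q3 β₁' : ℝ → ℝ) (ξ : EuclideanSpace ℝ (Fin n))
    (w w' w'' : ℝ → ℂ)
    (hq : ∀ t ∈ Ico (0:ℝ) T, HasDerivAt q (q1 t) t)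
    (hq1 : ∀ t ∈ Ico (0:ℝ) T, HasDerivAt q1 (q2 t) t)
    (hq2 : ∀ t ∈ Ico (0:ℝ) T, HasDerivAt q2 (q3 t) t)
    (hqne : ∀ t ∈ Ico (0:ℝ) T, q t ≠ 0)
    (hw : ∀ t ∈ Ico (0:ℝ) T, HasDerivAt w (w' t) t)
    (hw' : ∀ t ∈ Ico (0:ℝ) T, HasDerivAt w' (w'' t) t)
    (hode : ∀ t ∈ Ico (0:ℝ) T,
      w'' t = -((‖ξ‖^2 / (q t)^2 : ℝ) : ℂ) * w t)
    (hβ : ∀ t ∈ Ico (0:ℝ) T,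
      HasDerivAt (fun t =>
        -(1/4) * ((q1 t)^3/2 - q t * q1 t * q2 t - (q t)^2 * q3 t)) (β₁' t) t) :
    ∀ t ∈ Ico (0:ℝ) T,
      HasDerivAt
        (fun t =>
          q t * ‖ξ‖^4 * (Complex.normSq (w' t) + (‖ξ‖^2 / (q t)^2) * Complex.normSq (w t))
          + ((1/4) * q t * ((q1 t)^2/2 + q t * q2 t)) * ‖ξ‖^2 *
              (Complex.normSq (w' t) + (‖ξ‖^2 / (q t)^2) * Complex.normSq (w t))
          + (-(q1 t)) * ‖ξ‖^4 * ((starRingEnd ℂ) (w t) * w' t).re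
          + (-(1/4) * ((q1 t)^3/2 - q t * q1 t * q2 t - (q t)^2 * q3 t)) * ‖ξ‖^2 *
              ((starRingEnd ℂ) (w t) * w' t).re
          + (-(1/2) * (q t)^2 * q2 t) * ‖ξ‖^2 * Complex.normSq (w' t))
        (β₁' t * ‖ξ‖^2 * ((starRingEnd ℂ) (w t) * w' t).re) t := by
  intro t ht
  have hqt := hq t ht
  have hq1t := hq1 t ht
  have hode' : HasDerivAt w' (-(‖ξ‖ ^ 2 / q t ^ 2) • w t) t := by
    simpa [hode t ht, Complex.real_smul] using hw' t ht
  have hA := (hqt.mul_const (‖ξ‖ ^ 4)).fun_add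
    ((hasDerivAt_alpha₁ hqt hq1t (hq2 t ht)).mul_const (‖ξ‖ ^ 2))
  have hB := (hq1t.fun_neg.mul_const (‖ξ‖ ^ 4)).fun_add ((hβ t ht).mul_const (‖ξ‖ ^ 2))
  have hC := (hasDerivAt_gamma₀ hqt (hq2 t ht)).mul_const (‖ξ‖ ^ 2)
  convert hasDerivAt_quadratic_of_ode (hw t ht) hode'
    (hasDerivAt_const_div_sq _ hqt (hqne t ht)) hA hB hC ?norm_deriv ?norm using 1
  · funext s
    simp only [Complex.normSq_eq_norm_sq, Complex.inner, mul_comm (w' s)]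
    ring
  · rw [Complex.inner, mul_comm (w' t)]
    field_simp [hqne t ht]
    ring
  case norm_deriv => ring
  case norm =>
    field_simp [hqne t ht]
    ring

theorem stmt_18 {n : ℕ} (T : ℝ) (hT : 0 < T)
    (q q1 q2 q3 q4 β₁' : ℝ → ℝ) (ξ : EuclideanSpace ℝ (Fin n))
    (w w' w'' : ℝ → ℂ)
    (hq : ∀ t ∈ Ico (0:ℝ) T, HasDerivAt q (q1 t) t)
    (hq1 : ∀ t ∈ Ico (0:ℝ) T, HasDerivAt q1 (q2 t) t)
    (hq2 : ∀ t ∈ Ico (0:ℝ) T, HasDerivAt q2 (q3 t) t)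
    (hq3 : ∀ t ∈ Ico (0:ℝ) T, HasDerivAt q3 (q4 t) t)
    (hq4cont : ContinuousOn q4 (Ico (0:ℝ) T))
    (hqne : ∀ t ∈ Ico (0:ℝ) T, q t ≠ 0)
    (hw : ∀ t ∈ Ico (0:ℝ) T, HasDerivAt w (w' t) t)
    (hw' : ∀ t ∈ Ico (0:ℝ) T, HasDerivAt w' (w'' t) t)
    (hode : ∀ t ∈ Ico (0:ℝ) T,
      w'' t = -((‖ξ‖^2 / (q t)^2 : ℝ) : ℂ) * w t)
    (hβ : ∀ t ∈ Ico (0:ℝ) T,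
      HasDerivAt (fun t =>
        -(1/4) * ((q1 t)^3/2 - q t * q1 t * q2 t - (q t)^2 * q3 t)) (β₁' t) t) :
    ∀ t ∈ Ico (0:ℝ) T,
      HasDerivAt
        (fun t =>
          q t * ‖ξ‖^4 * (Complex.normSq (w' t) + (‖ξ‖^2 / (q t)^2) * Complex.normSq (w t))
          + ((1/4) * q t * ((q1 t)^2/2 + q t * q2 t)) * ‖ξ‖^2 *
              (Complex.normSq (w' t) + (‖ξ‖^2 / (q t)^2) * Complex.normSq (w t))
          + (-(q1 t)) * ‖ξ‖^4 * ((starRingEnd ℂ) (w t) * w' t).re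
          + (-(1/4) * ((q1 t)^3/2 - q t * q1 t * q2 t - (q t)^2 * q3 t)) * ‖ξ‖^2 *
              ((starRingEnd ℂ) (w t) * w' t).re
          + (-(1/2) * (q t)^2 * q2 t) * ‖ξ‖^2 * Complex.normSq (w' t))
        (β₁' t * ‖ξ‖^2 * ((starRingEnd ℂ) (w t) * w' t).re) t :=
  stmt_18_general T q q1 q2 q3 β₁' ξ w w' w'' hq hq1 hq2 hqne hw hw' hode hβ
end
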